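/- Let a, b ≥ 1 be integers and ζ ∈ D^{a+b}, and set L := lim_{r→0+} ∫_r^∞ ζ(ρ) ρ^{a+b−1} dρ. Then lim_{(s,t)→(0,0), s,t>0} ∫_t^∞ ∫_s^∞ ζ(√(u²+v²)) u^{a−1} v^{b−1} du dv = ((a+b) ω_{a+b} / (a b ω_a ω_b)) · L. -/

import Mathlib

/-!
In polar coordinates `v = ρ cos θ`, `u = ρ sin θ` the quadrant `{u > s, v > t}` is
`{ρ > max (t / cos θ) (s / sin θ)}`, so the double integral equals
`∫_0^{π/2} sin^{a-1} θ cos^{b-1} θ · F (max (t / cos θ) (s / sin θ)) dθ` with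
`F r = ∫_r^∞ ζ(ρ) ρ^{a+b-1} dρ`. Since `F` is continuous and bounded on `(0, ∞)` and tends to `L`
at `0`, dominated convergence gives the limit `L ∫_0^{π/2} sin^{a-1} cos^{b-1}`. This Beta
integral is `Γ(a/2) Γ(b/2) / (2 Γ((a+b)/2))`, as one sees by computing
`∫∫_{u,v>0} u^{a-1} v^{b-1} e^{-u²-v²}` in both coordinate systems, and that equals the
constant `(a+b) ω_{a+b} / (a b ω_a ω_b)`.
-/

noncomputable section

open Filter Topology

/-- The volume `ω_m = π^{m/2} / Γ(m/2 + 1)` of the unit ball in `ℝ^m`. -/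
def unitBallVol (m : ℕ) : ℝ := Real.pi ^ ((m : ℝ) / 2) / Real.Gamma ((m : ℝ) / 2 + 1)

open Real Set MeasureTheory

section Polar

variable {E : Type*} [NormedAddCommGroup E] [NormedSpace ℝ E]

lemma MeasureTheory.Integrable.integrableOn_comp_polarCoord_symm {f : ℝ × ℝ → E}
    (hf : Integrable f) :
    IntegrableOn (fun p ↦ p.1 • f (polarCoord.symm p)) polarCoord.target := by
  have hsymm := (integrableOn_image_iff_integrableOn_abs_det_fderiv_smul volume
    polarCoord.open_target.measurableSet
    (fun p _ ↦ (hasFDerivAt_polarCoord_symm p).hasFDerivWithinAt) polarCoord.symm.injOn f).1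
    (by rw [polarCoord.symm_image_target_eq_source]; exact hf.integrableOn)
  refine hsymm.congr_fun (fun p hp ↦ ?_) polarCoord.open_target.measurableSet
  simp only [det_fderivPolarCoordSymm, abs_of_pos (show 0 < p.1 from hp.1)]

lemma Ioi_prod_Ioo_zero_pi_div_two_subset_polarCoord_target :
    Ioi 0 ×ˢ Ioo 0 (π / 2) ⊆ polarCoord.target := by
  rw [polarCoord_target]
  exact prod_mono subset_rfl (Ioo_subset_Ioo (by linarith [pi_pos]) (by linarith [pi_pos]))

lemma mem_Ioi_prod_Ioo_zero_pi_div_two_of_mem_polarCoord_target {p : ℝ × ℝ}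
    (hp : p ∈ polarCoord.target) (hpos : polarCoord.symm p ∈ Ioi 0 ×ˢ Ioi 0) :
    p ∈ Ioi 0 ×ˢ Ioo 0 (π / 2) := by
  obtain ⟨hρ, hθ⟩ := (hp : p ∈ Ioi 0 ×ˢ Ioo (-π) π)
  simp only [polarCoord_symm_apply, mem_prod, mem_Ioi] at hpos
  have hcos : 0 < cos p.2 := pos_of_mul_pos_right hpos.1 hρ.le
  have hsin : 0 < sin p.2 := pos_of_mul_pos_right hpos.2 hρ.le
  refine ⟨hρ, ?_, ?_⟩
  · by_contra! h
    exact (sin_nonpos_of_nonpos_of_neg_pi_le h hθ.1.le).not_gt hsin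
  · by_contra! h
    exact (cos_nonpos_of_pi_div_two_le_of_le h (by linarith [hθ.2])).not_gt hcos

lemma integral_eq_setIntegral_polarCoord_quadrant {f : ℝ × ℝ → E}
    (hf : Function.support f ⊆ Ioi 0 ×ˢ Ioi 0) :
    ∫ z, f z = ∫ p in Ioi 0 ×ˢ Ioo 0 (π / 2), p.1 • f (p.1 * cos p.2, p.1 * sin p.2) := by
  rw [← integral_comp_polarCoord_symm]
  refine setIntegral_eq_of_subset_of_forall_sdiff_eq_zero polarCoord.open_target.measurableSet
    Ioi_prod_Ioo_zero_pi_div_two_subset_polarCoord_target fun p ⟨hp, hq⟩ ↦ ?_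
  by_contra hne
  exact hq (mem_Ioi_prod_Ioo_zero_pi_div_two_of_mem_polarCoord_target hp
    (hf (right_ne_zero_of_smul hne)))

lemma integral_eq_integral_Ioo_integral_Ioi_polar {f : ℝ × ℝ → E} (hf : Integrable f)
    (hsupp : Function.support f ⊆ Ioi 0 ×ˢ Ioi 0) :
    ∫ z, f z = ∫ θ in Ioo 0 (π / 2), ∫ ρ in Ioi 0, ρ • f (ρ * cos θ, ρ * sin θ) := by
  have hint : IntegrableOn (fun p : ℝ × ℝ ↦ p.1 • f (p.1 * cos p.2, p.1 * sin p.2))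
      (Ioi 0 ×ˢ Ioo 0 (π / 2)) (volume.prod volume) :=
    hf.integrableOn_comp_polarCoord_symm.mono_set
      Ioi_prod_Ioo_zero_pi_div_two_subset_polarCoord_target
  rw [integral_eq_setIntegral_polarCoord_quadrant hsupp, Measure.volume_eq_prod,
    ← setIntegral_prod_swap]
  exact setIntegral_prod _ hint.swap

end Polar

lemma integral_pow_mul_exp_neg_sq_Ioi (n : ℕ) :
    ∫ x in Ioi (0 : ℝ), x ^ n * exp (-x ^ 2) = Gamma ((n + 1) / 2) / 2 := by
  have h := integral_rpow_mul_exp_neg_rpow two_pos (neg_one_lt_zero.trans_le (Nat.cast_nonneg n))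
  simp only [rpow_natCast, rpow_two] at h
  rw [h, one_div_mul_eq_div]

lemma cos_pos_of_mem_Ioo_zero_pi_div_two {θ : ℝ} (hθ : θ ∈ Ioo 0 (π / 2)) : 0 < cos θ :=
  cos_pos_of_mem_Ioo ⟨by linarith [pi_pos, hθ.1], hθ.2⟩

lemma sin_pos_of_mem_Ioo_zero_pi_div_two {θ : ℝ} (hθ : θ ∈ Ioo 0 (π / 2)) : 0 < sin θ :=
  sin_pos_of_pos_of_lt_pi hθ.1 (by linarith [pi_pos, hθ.2])

lemma integral_sin_pow_mul_cos_pow_Ioo (p q : ℕ) :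
    ∫ θ in Ioo 0 (π / 2), sin θ ^ p * cos θ ^ q =
      Gamma ((p + 1) / 2) * Gamma ((q + 1) / 2) / (2 * Gamma ((p + q + 2) / 2)) := by
  set g : ℕ → ℝ → ℝ := fun n ↦ (Ioi 0).indicator fun x ↦ x ^ n * exp (-x ^ 2)
  have hprod : ∫ z : ℝ × ℝ, g q z.1 * g p z.2 =
      Gamma ((q + 1) / 2) / 2 * (Gamma ((p + 1) / 2) / 2) := by
    rw [Measure.volume_eq_prod, integral_prod_mul, integral_indicator measurableSet_Ioi,
      integral_indicator measurableSet_Ioi, integral_pow_mul_exp_neg_sq_Ioi,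
      integral_pow_mul_exp_neg_sq_Ioi]
  have hsupp : Function.support (fun z : ℝ × ℝ ↦ g q z.1 * g p z.2) ⊆ Ioi 0 ×ˢ Ioi 0 :=
    fun z hz ↦ ⟨support_indicator_subset (left_ne_zero_of_mul hz),
      support_indicator_subset (right_ne_zero_of_mul hz)⟩
  have hpolar : ∫ z : ℝ × ℝ, g q z.1 * g p z.2 =
      (∫ ρ in Ioi (0 : ℝ), ρ ^ (p + q + 1) * exp (-ρ ^ 2)) *
        ∫ θ in Ioo 0 (π / 2), sin θ ^ p * cos θ ^ q := by
    rw [integral_eq_setIntegral_polarCoord_quadrant hsupp, Measure.volume_eq_prod,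
      ← setIntegral_prod_mul]
    refine setIntegral_congr_fun (measurableSet_Ioi.prod measurableSet_Ioo)
      fun z ⟨(hρ : 0 < z.1), hθ⟩ ↦ ?_
    simp only [g, smul_eq_mul,
      indicator_of_mem (mem_Ioi.2 (mul_pos hρ (cos_pos_of_mem_Ioo_zero_pi_div_two hθ))),
      indicator_of_mem (mem_Ioi.2 (mul_pos hρ (sin_pos_of_mem_Ioo_zero_pi_div_two hθ)))]
    have hexp : exp (-(z.1 * cos z.2) ^ 2) * exp (-(z.1 * sin z.2) ^ 2) = exp (-z.1 ^ 2) := by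
      rw [← exp_add]
      congr 1
      linear_combination (-z.1 ^ 2) * sin_sq_add_cos_sq z.2
    rw [← hexp]
    ring
  rw [hprod, integral_pow_mul_exp_neg_sq_Ioi] at hpolar
  have hΓ : 0 < Gamma ((p + q + 2) / 2) := Gamma_pos_of_pos (by positivity)
  rw [eq_div_iff (by positivity)]
  push_cast at hpolar
  rw [show (p : ℝ) + q + 1 + 1 = p + q + 2 by ring] at hpolar
  linear_combination (-4) * hpolar

lemma integral_sin_pow_mul_cos_pow_Ioo_eq_unitBallVol {a b : ℕ} (ha : 1 ≤ a) (hb : 1 ≤ b) :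
    ∫ θ in Ioo 0 (π / 2), sin θ ^ (a - 1) * cos θ ^ (b - 1) =
      ((a : ℝ) + b) * unitBallVol (a + b) / ((a : ℝ) * b * unitBallVol a * unitBallVol b) := by
  have ha' : (0 : ℝ) < a := by exact_mod_cast ha
  have hb' : (0 : ℝ) < b := by exact_mod_cast hb
  rw [integral_sin_pow_mul_cos_pow_Ioo, Nat.cast_sub ha, Nat.cast_sub hb, Nat.cast_one,
    sub_add_cancel, sub_add_cancel, show (a : ℝ) - 1 + (b - 1) + 2 = a + b by ring]
  simp only [unitBallVol, Nat.cast_add, add_div,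
    rpow_add pi_pos, Gamma_add_one (by positivity : (a : ℝ) / 2 ≠ 0),
    Gamma_add_one (by positivity : (b : ℝ) / 2 ≠ 0),
    Gamma_add_one (by positivity : (a : ℝ) / 2 + b / 2 ≠ 0)]
  have h1 : 0 < Gamma ((a : ℝ) / 2) := Gamma_pos_of_pos (by positivity)
  have h2 : 0 < Gamma ((b : ℝ) / 2) := Gamma_pos_of_pos (by positivity)
  have h3 : 0 < Gamma ((a : ℝ) / 2 + b / 2) := Gamma_pos_of_pos (by positivity)
  have h4 : 0 < π ^ ((a : ℝ) / 2) := rpow_pos_of_pos pi_pos _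
  have h5 : 0 < π ^ ((b : ℝ) / 2) := rpow_pos_of_pos pi_pos _
  field_simp

section TailIntegral

variable {E : Type*} [NormedAddCommGroup E] [NormedSpace ℝ E] {φ : ℝ → E} {R : ℝ}

lemma integral_Ioi_eq_intervalIntegral_of_eq_zero (hR : ∀ ρ, R < ρ → φ ρ = 0) (r : ℝ) :
    ∫ ρ in Ioi r, φ ρ = ∫ ρ in r..R, φ ρ := by
  rcases le_or_gt r R with hrR | hRr
  · rw [intervalIntegral.integral_of_le hrR]
    exact setIntegral_eq_of_subset_of_forall_sdiff_eq_zero measurableSet_Ioi Ioc_subset_Ioi_self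
      fun ρ ⟨hρ, hρR⟩ ↦ hR ρ (not_le.1 fun h ↦ hρR ⟨hρ, h⟩)
  · rw [intervalIntegral.integral_of_ge hRr.le,
      setIntegral_eq_zero_of_forall_eq_zero (t := Ioi r) fun ρ hρ ↦ hR ρ (hRr.trans hρ),
      setIntegral_eq_zero_of_forall_eq_zero (t := Ioc R r) fun ρ hρ ↦ hR ρ hρ.1, neg_zero]

lemma continuousOn_integral_Ioi [CompleteSpace E] (hφ : ContinuousOn φ (Ioi 0))
    (hR : ∀ ρ, R < ρ → φ ρ = 0) : ContinuousOn (fun r ↦ ∫ ρ in Ioi r, φ ρ) (Ioi 0) := by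
  -- enlarging `R` to `max R 1` keeps every interval `[r, R]` with `r > 0` inside `(0, ∞)`
  have hR' : ∀ ρ, max R 1 < ρ → φ ρ = 0 := fun ρ h ↦ hR ρ ((le_max_left _ _).trans_lt h)
  intro r (hr : 0 < r)
  have hsub : uIcc r (max R 1) ⊆ Ioi 0 := fun x hx ↦
    (lt_min hr (zero_lt_one.trans_le (le_max_right _ _))).trans_le hx.1
  have hderiv : HasDerivAt (fun r ↦ ∫ ρ in r..max R 1, φ ρ) (-φ r) r :=
    intervalIntegral.integral_hasDerivAt_left (hφ.mono hsub).intervalIntegrable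
      (hφ.stronglyMeasurableAtFilter isOpen_Ioi r hr) (hφ.continuousAt (Ioi_mem_nhds hr))
  simp_rw [integral_Ioi_eq_intervalIntegral_of_eq_zero hR']
  exact hderiv.continuousAt.continuousWithinAt

end TailIntegral

lemma exists_norm_le_of_continuousOn_Ioi {E : Type*} [NormedAddCommGroup E] {f : ℝ → E} {L : E}
    {R : ℝ} (hf : ContinuousOn f (Ioi 0)) (hL : Tendsto f (𝓝[>] 0) (𝓝 L))
    (hR : ∀ r, R < r → f r = 0) : ∃ C, ∀ r, 0 < r → ‖f r‖ ≤ C := by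
  classical
  have hg : ContinuousOn (Function.update f 0 L) (Icc 0 R) := by
    intro x hx
    rcases hx.1.eq_or_lt with rfl | hx0
    · exact continuousWithinAt_update_same.2
        (hL.mono_left (nhdsWithin_mono _ fun y hy ↦ lt_of_le_of_ne hy.1.1 (Ne.symm hy.2)))
    · exact (continuousWithinAt_update_of_ne hx0.ne').2
        (hf.continuousAt (Ioi_mem_nhds hx0)).continuousWithinAt
  obtain ⟨C, hC⟩ := isCompact_Icc.exists_bound_of_continuousOn hg
  refine ⟨max C 0, fun r hr ↦ ?_⟩
  rcases le_or_gt r R with hrR | hRr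
  · have := hC r ⟨hr.le, hrR⟩
    rw [Function.update_of_ne hr.ne'] at this
    exact this.trans (le_max_left _ _)
  · simp [hR r hRr]

def quadrantEntryRadius (s t θ : ℝ) : ℝ := max (t / cos θ) (s / sin θ)

section QuadrantEntryRadius

variable {s t θ : ℝ}

lemma quadrantEntryRadius_lt_iff (hθ : θ ∈ Ioo 0 (π / 2)) {ρ : ℝ} :
    quadrantEntryRadius s t θ < ρ ↔ t < ρ * cos θ ∧ s < ρ * sin θ := by
  rw [quadrantEntryRadius, max_lt_iff, div_lt_iff₀ (cos_pos_of_mem_Ioo_zero_pi_div_two hθ),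
    div_lt_iff₀ (sin_pos_of_mem_Ioo_zero_pi_div_two hθ)]

lemma quadrantEntryRadius_pos (ht : 0 < t) (hθ : θ ∈ Ioo 0 (π / 2)) :
    0 < quadrantEntryRadius s t θ :=
  (div_pos ht (cos_pos_of_mem_Ioo_zero_pi_div_two hθ)).trans_le (le_max_left _ _)

lemma continuousOn_quadrantEntryRadius :
    ContinuousOn (quadrantEntryRadius s t) (Ioo 0 (π / 2)) :=
  ContinuousOn.sup
    (continuousOn_const.div continuous_cos.continuousOn
      fun _ hθ ↦ (cos_pos_of_mem_Ioo_zero_pi_div_two hθ).ne')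
    (continuousOn_const.div continuous_sin.continuousOn
      fun _ hθ ↦ (sin_pos_of_mem_Ioo_zero_pi_div_two hθ).ne')

lemma tendsto_quadrantEntryRadius (hθ : θ ∈ Ioo 0 (π / 2)) :
    Tendsto (fun p : ℝ × ℝ ↦ quadrantEntryRadius p.1 p.2 θ)
      (𝓝[Ioi 0 ×ˢ Ioi 0] (0, 0)) (𝓝[>] 0) := by
  refine tendsto_nhdsWithin_iff.2 ⟨?_, ?_⟩
  · have hcont : Continuous fun p : ℝ × ℝ ↦ quadrantEntryRadius p.1 p.2 θ :=
      (continuous_snd.div_const _).max (continuous_fst.div_const _)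
    simpa [quadrantEntryRadius] using hcont.continuousWithinAt.tendsto (x := (0, 0))
  · filter_upwards [self_mem_nhdsWithin] with p hp using quadrantEntryRadius_pos hp.2 hθ

end QuadrantEntryRadius

section PolarDecomposition

variable {ζ : ℝ → ℝ} {M s t : ℝ} (m n : ℕ)

lemma integrableOn_Ioi_prod_Ioi_radial_mul_pow (hcont : ContinuousOn ζ (Ioi 0))
    (hM : ∀ ρ, M < ρ → ζ ρ = 0) (ht : 0 < t) :
    IntegrableOn (fun z : ℝ × ℝ ↦ ζ (√(z.2 ^ 2 + z.1 ^ 2)) * z.2 ^ m * z.1 ^ n)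
      (Ioi t ×ˢ Ioi s) := by
  have hpos : ∀ z : ℝ × ℝ, t ≤ z.1 → 0 < √(z.2 ^ 2 + z.1 ^ 2) := fun z hz ↦
    sqrt_pos.2 (by nlinarith)
  have hK : ContinuousOn (fun z : ℝ × ℝ ↦ ζ (√(z.2 ^ 2 + z.1 ^ 2)) * z.2 ^ m * z.1 ^ n)
      (Icc t M ×ˢ Icc s M) :=
    ((hcont.comp (by fun_prop) fun z hz ↦ hpos z hz.1.1).mul (by fun_prop)).mul (by fun_prop)
  refine (hK.integrableOn_compact (isCompact_Icc.prod isCompact_Icc)).of_forall_sdiff_eq_zero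
    (measurableSet_Ioi.prod measurableSet_Ioi) fun z ⟨⟨hz₁, hz₂⟩, hzK⟩ ↦ ?_
  suffices M < √(z.2 ^ 2 + z.1 ^ 2) by simp [hM _ this]
  have hzM : M < z.1 ∨ M < z.2 := by
    by_contra! h
    exact hzK ⟨⟨hz₁.le, h.1⟩, hz₂.le, h.2⟩
  rcases hzM with h | h
  · exact h.trans_le (le_sqrt_of_sq_le (by nlinarith))
  · exact h.trans_le (le_sqrt_of_sq_le (by nlinarith))

lemma integral_Ioi_integral_Ioi_radial_mul_pow (hcont : ContinuousOn ζ (Ioi 0))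
    (hM : ∀ ρ, M < ρ → ζ ρ = 0) (hs : 0 ≤ s) (ht : 0 < t) :
    ∫ v in Ioi t, ∫ u in Ioi s, ζ (√(u ^ 2 + v ^ 2)) * u ^ m * v ^ n =
      ∫ θ in Ioo 0 (π / 2), sin θ ^ m * cos θ ^ n *
        ∫ ρ in Ioi (quadrantEntryRadius s t θ), ζ ρ * ρ ^ (m + n + 1) := by
  set W : ℝ × ℝ → ℝ := fun z ↦ ζ (√(z.2 ^ 2 + z.1 ^ 2)) * z.2 ^ m * z.1 ^ n
  set Q : Set (ℝ × ℝ) := Ioi t ×ˢ Ioi s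
  have hQ : MeasurableSet Q := measurableSet_Ioi.prod measurableSet_Ioi
  have hWint : IntegrableOn W Q := integrableOn_Ioi_prod_Ioi_radial_mul_pow m n hcont hM ht
  have hsupp : Function.support (Q.indicator W) ⊆ Ioi 0 ×ˢ Ioi 0 :=
    support_indicator_subset.trans (prod_mono (Ioi_subset_Ioi ht.le) (Ioi_subset_Ioi hs))
  calc ∫ v in Ioi t, ∫ u in Ioi s, ζ (√(u ^ 2 + v ^ 2)) * u ^ m * v ^ n
      = ∫ z in Q, W z := (setIntegral_prod W hWint).symm
    _ = ∫ z, Q.indicator W z := (integral_indicator hQ).symm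
    _ = ∫ θ in Ioo 0 (π / 2), ∫ ρ in Ioi 0, ρ • Q.indicator W (ρ * cos θ, ρ * sin θ) :=
      integral_eq_integral_Ioo_integral_Ioi_polar ((integrable_indicator_iff hQ).2 hWint) hsupp
    _ = _ := setIntegral_congr_fun measurableSet_Ioo fun θ hθ ↦ ?_
  have he := quadrantEntryRadius_pos (s := s) ht hθ
  have hmem : ∀ ρ, (ρ * cos θ, ρ * sin θ) ∈ Q ↔ quadrantEntryRadius s t θ < ρ := fun ρ ↦
    (quadrantEntryRadius_lt_iff hθ).symm
  rw [← integral_const_mul]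
  calc ∫ ρ in Ioi 0, ρ • Q.indicator W (ρ * cos θ, ρ * sin θ)
      = ∫ ρ in Ioi (quadrantEntryRadius s t θ), ρ • Q.indicator W (ρ * cos θ, ρ * sin θ) :=
        setIntegral_eq_of_subset_of_forall_sdiff_eq_zero measurableSet_Ioi
          (Ioi_subset_Ioi he.le) fun ρ ⟨_, hρ⟩ ↦ by
            rw [indicator_of_notMem (mt (hmem ρ).1 hρ), smul_zero]
    _ = _ := setIntegral_congr_fun measurableSet_Ioi fun ρ (hρ : _ < ρ) ↦ ?_
  have hsqrt : √((ρ * sin θ) ^ 2 + (ρ * cos θ) ^ 2) = ρ := by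
    rw [show (ρ * sin θ) ^ 2 + (ρ * cos θ) ^ 2 = ρ ^ 2 by
      linear_combination ρ ^ 2 * sin_sq_add_cos_sq θ, sqrt_sq (he.trans hρ).le]
  rw [indicator_of_mem ((hmem ρ).2 hρ), smul_eq_mul]
  simp only [W, hsqrt]
  ring

end PolarDecomposition

lemma tendsto_integral_mul_comp_quadrantEntryRadius {w F : ℝ → ℝ} {L C : ℝ} (hw : Continuous w)
    (hF : ContinuousOn F (Ioi 0)) (hFL : Tendsto F (𝓝[>] 0) (𝓝 L))
    (hC : ∀ r, 0 < r → ‖F r‖ ≤ C) :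
    Tendsto (fun p : ℝ × ℝ ↦ ∫ θ in Ioo 0 (π / 2), w θ * F (quadrantEntryRadius p.1 p.2 θ))
      (𝓝[Ioi 0 ×ˢ Ioi 0] (0, 0)) (𝓝 ((∫ θ in Ioo 0 (π / 2), w θ) * L)) := by
  rw [← integral_mul_const]
  refine tendsto_integral_filter_of_dominated_convergence (fun θ ↦ ‖w θ‖ * C) ?_ ?_
    ((hw.integrableOn_Icc.mono_set Ioo_subset_Icc_self).norm.mul_const C) ?_
  · filter_upwards [self_mem_nhdsWithin] with p hp
    exact (hw.continuousOn.mul (hF.comp continuousOn_quadrantEntryRadius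
      fun θ hθ ↦ quadrantEntryRadius_pos hp.2 hθ)).aestronglyMeasurable measurableSet_Ioo
  · filter_upwards [self_mem_nhdsWithin] with p hp
    refine (ae_restrict_iff' measurableSet_Ioo).2 (Eventually.of_forall fun θ hθ ↦ ?_)
    rw [norm_mul]
    exact mul_le_mul_of_nonneg_left (hC _ (quadrantEntryRadius_pos hp.2 hθ)) (norm_nonneg _)
  · refine (ae_restrict_iff' measurableSet_Ioo).2 (Eventually.of_forall fun θ hθ ↦ ?_)
    exact (hFL.comp (tendsto_quadrantEntryRadius hθ)).const_mul (w θ)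

theorem stmt14_general (a b : ℕ) (ha : 1 ≤ a) (hb : 1 ≤ b) (ζ : ℝ → ℝ)
    (hcont : ContinuousOn ζ (Set.Ioi 0))
    (hsupp : ∃ M : ℝ, ∀ t : ℝ, M < t → ζ t = 0)
    (L : ℝ)
    (hL : Tendsto (fun r : ℝ => ∫ ρ in Set.Ioi r, ζ ρ * ρ ^ (a + b - 1))
      (nhdsWithin 0 (Set.Ioi 0)) (𝓝 L)) :
    Tendsto
      (fun p : ℝ × ℝ => ∫ v in Set.Ioi p.2, ∫ u in Set.Ioi p.1,
        ζ (Real.sqrt (u ^ 2 + v ^ 2)) * u ^ (a - 1) * v ^ (b - 1))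
      (nhdsWithin ((0 : ℝ), (0 : ℝ)) (Set.Ioi 0 ×ˢ Set.Ioi 0))
      (𝓝 (((a : ℝ) + b) * unitBallVol (a + b) /
        ((a : ℝ) * b * unitBallVol a * unitBallVol b) * L)) := by
  obtain ⟨M, hM⟩ := hsupp
  have hφ : ContinuousOn (fun ρ ↦ ζ ρ * ρ ^ (a + b - 1)) (Ioi 0) :=
    hcont.mul (continuous_pow _).continuousOn
  have hφM : ∀ ρ, M < ρ → ζ ρ * ρ ^ (a + b - 1) = 0 := fun ρ h ↦ by rw [hM ρ h, zero_mul]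
  have hF := continuousOn_integral_Ioi hφ hφM
  obtain ⟨C, hC⟩ := exists_norm_le_of_continuousOn_Ioi hF hL fun r hr ↦
    setIntegral_eq_zero_of_forall_eq_zero fun ρ (hρ : r < ρ) ↦ hφM ρ (hr.trans hρ)
  rw [← integral_sin_pow_mul_cos_pow_Ioo_eq_unitBallVol ha hb]
  refine (tendsto_integral_mul_comp_quadrantEntryRadius (by fun_prop) hF hL hC).congr' ?_
  filter_upwards [self_mem_nhdsWithin] with p ⟨hs, ht⟩
  rw [integral_Ioi_integral_Ioi_radial_mul_pow _ _ hcont hM hs.le ht,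
    show a - 1 + (b - 1) + 1 = a + b - 1 by omega]

/-- For `ζ ∈ D^{a+b}` with
`L = lim_{r→0⁺} ∫_r^∞ ζ(ρ) ρ^{a+b-1} dρ`, one has
`∫_t^∞ ∫_s^∞ ζ(√(u²+v²)) u^{a-1} v^{b-1} du dv → ((a+b) ω_{a+b}/(a b ω_a ω_b)) L`
as `(s,t) → (0,0)`, `s,t > 0`. -/
theorem stmt14 (a b : ℕ) (ha : 1 ≤ a) (hb : 1 ≤ b) (ζ : ℝ → ℝ)
    (hcont : ContinuousOn ζ (Set.Ioi 0)) (hzero : ∀ t ≤ (0 : ℝ), ζ t = 0)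
    (hsupp : ∃ M : ℝ, ∀ t : ℝ, M < t → ζ t = 0)
    (hdecay : Tendsto (fun t : ℝ => t ^ (a + b) * ζ t) (nhdsWithin 0 (Set.Ioi 0)) (𝓝 0))
    (L : ℝ)
    (hL : Tendsto (fun r : ℝ => ∫ ρ in Set.Ioi r, ζ ρ * ρ ^ (a + b - 1))
      (nhdsWithin 0 (Set.Ioi 0)) (𝓝 L)) :
    Tendsto
      (fun p : ℝ × ℝ => ∫ v in Set.Ioi p.2, ∫ u in Set.Ioi p.1,
        ζ (Real.sqrt (u ^ 2 + v ^ 2)) * u ^ (a - 1) * v ^ (b - 1))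
      (nhdsWithin ((0 : ℝ), (0 : ℝ)) (Set.Ioi 0 ×ˢ Set.Ioi 0))
      (𝓝 (((a : ℝ) + b) * unitBallVol (a + b) /
        ((a : ℝ) * b * unitBallVol a * unitBallVol b) * L)) :=
  stmt14_general a b ha hb ζ hcont hsupp L hL
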